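/- Let T0 and T1 satisfy (C1) and (C2). Then K(T0,T1) = w_• · #leaves(T0) · #leaves(T1). Moreover, this is the minimal possible value of the kernel: for any two rooted trees S and T, K(S,T) ≥ w_• · #leaves(S) · #leaves(T). -/

import Mathlib

open scoped Classical

/-- Finite rooted trees: a tree is a root together with a list of child subtrees.
(For unordered trees, the list order is irrelevant; isomorphism is defined below.) -/
inductive RTree : Type where
  | node : List RTree → RTree

namespace RTree

/-- The list of root-child subtrees. -/
def children : RTree → List RTree
  | node cs => cs

/-- The subtree rooted at the vertex reached by the path `p` of child indices
(`none` if the path is invalid). -/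
def subAt : RTree → List ℕ → Option RTree
  | t, [] => some t
  | t, i :: p =>
    match (children t)[i]? with
    | some c => subAt c p
    | none => none
termination_by t p => p.length
decreasing_by simp

/-- Vertices of a tree are identified with the valid paths from the root. -/
def IsVertex (t : RTree) (p : List ℕ) : Prop := t.subAt p ≠ none

/-- The subtree `t[p]` rooted at the vertex `p`. -/
def subtreeAt (t : RTree) (p : List ℕ) : RTree := (t.subAt p).getD (node [])

/-- A leaf is a vertex with no children. -/
def IsLeafAt (t : RTree) (p : List ℕ) : Prop := t.IsVertex p ∧ ¬ t.IsVertex (p ++ [0])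

/-- The number of leaves of a tree. -/
noncomputable def leafCount (t : RTree) : ℕ := {p : List ℕ | t.IsLeafAt p}.ncard

/-- The height of a tree: the maximal length of a valid path. -/
noncomputable def height (t : RTree) : ℕ :=
  sSup {n : ℕ | ∃ p, t.IsVertex p ∧ p.length = n}

/-- The height of the vertex `p` in `t`, i.e. the height of the subtree `t[p]`. -/
noncomputable def heightAt (t : RTree) (p : List ℕ) : ℕ := (t.subtreeAt p).height

/-- Isomorphism of unordered rooted trees: a one-to-one correspondence between the
vertex sets mapping children to children. -/
def Iso (s t : RTree) : Prop :=
  ∃ f g : List ℕ → List ℕ,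
    (∀ p, s.IsVertex p → t.IsVertex (f p)) ∧
    (∀ q, t.IsVertex q → s.IsVertex (g q)) ∧
    (∀ p, s.IsVertex p → g (f p) = p) ∧
    (∀ q, t.IsVertex q → f (g q) = q) ∧
    (∀ p i, s.IsVertex (p ++ [i]) → ∃ j, f (p ++ [i]) = f p ++ [j])

/-- The isomorphism class of a tree. -/
def isoClass (s : RTree) : Set RTree := {t | s.Iso t}

/-- `S(T)`: the set of isomorphism classes of subtrees of `T`. -/
def classes (T : RTree) : Set (Set RTree) :=
  {C | ∃ p, T.IsVertex p ∧ C = isoClass (T.subtreeAt p)}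

/-- `N_C(T)`: the number of vertices of `T` whose subtree belongs to the class `C`. -/
noncomputable def classCount (C : Set RTree) (T : RTree) : ℕ :=
  {p : List ℕ | T.IsVertex p ∧ isoClass (T.subtreeAt p) = C}.ncard

/-- The subtree kernel `K(T1,T2) = Σ_{C ∈ S(T1) ∩ S(T2)} w_C · N_C(T1) · N_C(T2)`,
for a weight function `w` on isomorphism classes. -/
noncomputable def kernel (w : Set RTree → ℝ) (T1 T2 : RTree) : ℝ :=
  ∑' C : ↥(classes T1 ∩ classes T2),
    w (C : Set RTree) * (classCount (C : Set RTree) T1 : ℝ) * (classCount (C : Set RTree) T2 : ℝ)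

/-- The class of the single-vertex tree (the class of any leaf). -/
def leafClass : Set RTree := isoClass (node [])

/-- Condition (C1): within `T`, distinct non-leaf vertices root non-isomorphic subtrees. -/
def CondOne (T : RTree) : Prop :=
  ∀ p q, T.IsVertex p → T.IsVertex q → ¬ T.IsLeafAt p → ¬ T.IsLeafAt q → p ≠ q →
    ¬ Iso (T.subtreeAt p) (T.subtreeAt q)

/-- Condition (C2): no subtree of `T0` rooted at a non-leaf vertex is isomorphic to a
subtree of `T1` rooted at a non-leaf vertex. -/
def CondTwo (T0 T1 : RTree) : Prop :=
  ∀ p q, T0.IsVertex p → T1.IsVertex q → ¬ T0.IsLeafAt p → ¬ T1.IsLeafAt q →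
    ¬ Iso (T0.subtreeAt p) (T1.subtreeAt q)

/-- Replace, in `t`, the subtree rooted at the vertex `p` by `s`. -/
def replaceAt : RTree → List ℕ → RTree → RTree
  | _, [], s => s
  | node cs, i :: p, s => node (cs.set i (replaceAt (cs.getD i (node [])) p s))
termination_by t p s => p.length
decreasing_by simp

/-- `T^u = T(u ↦ τ_{H(u)})`: the tree `T` where the subtree rooted at `u` is replaced
by the tree of the same height in the sequence `τ`. -/
noncomputable def edit (T : RTree) (u : List ℕ) (τ : ℕ → RTree) : RTree :=
  T.replaceAt u (τ (T.heightAt u))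

/-- `des(u)`: the strict descendants of the vertex `u` in `T`. -/
def des (T : RTree) (u : List ℕ) : Set (List ℕ) :=
  {z | T.IsVertex z ∧ u <+: z ∧ z ≠ u}

/-- `fam(u)`: the vertex `u` together with its ancestors and descendants in `T`. -/
def fam (T : RTree) (u : List ℕ) : Set (List ℕ) :=
  {z | T.IsVertex z ∧ (z <+: u ∨ u <+: z)}

/-- Condition (C3): for `u ∈ T0`, `v ∈ T1`, subtrees of the edited trees `T0^u` and `T1^v`
rooted at non-leaf vertices outside the grafted copies are pairwise non-isomorphic. -/
def CondThree (T0 T1 : RTree) (τ : ℕ → RTree) : Prop :=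
  ∀ u v, T0.IsVertex u → T1.IsVertex v →
    ∀ p q, (edit T0 u τ).IsVertex p → ¬ u <+: p → ¬ (edit T0 u τ).IsLeafAt p →
      (edit T1 v τ).IsVertex q → ¬ v <+: q → ¬ (edit T1 v τ).IsLeafAt q →
      ¬ Iso ((edit T0 u τ).subtreeAt p) ((edit T1 v τ).subtreeAt q)

/-- The probability mass function of the binomial distribution `B(n,q)`. -/
noncomputable def binomPMF (n : ℕ) (q : ℝ) (k : ℕ) : ℝ :=
  (n.choose k : ℝ) * q ^ k * (1 - q) ^ (n - k)

/-- `c_h`: the number of vertices of height `h` in `T`. -/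
noncomputable def cAt (T : RTree) (h : ℕ) : ℕ :=
  {p : List ℕ | T.IsVertex p ∧ T.heightAt p = h}.ncard

/-- Expectation of `f(u)` where the vertex `u` of `T` is drawn according to the
random edit model: a height `h ~ B(H, ρ/H)`, then `u` uniform among vertices of height `h`. -/
noncomputable def editExp (T : RTree) (H : ℕ) (ρ : ℝ) (f : List ℕ → ℝ) : ℝ :=
  ∑ h ∈ Finset.range (H + 1), binomPMF H (ρ / H) h *
    ((∑' u : {p : List ℕ // T.IsVertex p ∧ T.heightAt p = h}, f u.1) / (cAt T h : ℝ))

/-- Expectation of `g(u,v)` for independent random-edit vertices `u` of `Ti` and `v` of `Tj`. -/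
noncomputable def editExp2 (Ti Tj : RTree) (H : ℕ) (ρ : ℝ) (g : List ℕ → List ℕ → ℝ) : ℝ :=
  ∑ h ∈ Finset.range (H + 1), ∑ h' ∈ Finset.range (H + 1),
    binomPMF H (ρ / H) h * binomPMF H (ρ / H) h' *
    ((∑' u : {p : List ℕ // Ti.IsVertex p ∧ Ti.heightAt p = h},
        ∑' v : {q : List ℕ // Tj.IsVertex q ∧ Tj.heightAt q = h'}, g u.1 v.1)
      / ((cAt Ti h : ℝ) * (cAt Tj h' : ℝ)))

/-- `Δ_x^i = E_{u,v}[K(T_i^x, T_i^u) − K(T_i^x, T_j^v)]` where `Ti, Tj` are the trees of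
classes `i` and `j = 1 − i`, and `u, v` are independent random-edit vertices. -/
noncomputable def Delta (w : Set RTree → ℝ) (Ti Tj : RTree) (τ : ℕ → RTree)
    (H : ℕ) (ρ : ℝ) (x : List ℕ) : ℝ :=
  editExp2 Ti Tj H ρ (fun u v =>
    kernel w (edit Ti x τ) (edit Ti u τ) - kernel w (edit Ti x τ) (edit Tj v τ))

/-- `B_{u,v}`. -/
def Bset (T : RTree) (u v : List ℕ) : Set (List ℕ) :=
  if u = v then insert u (des T u) else fam T u ∪ fam T v

end RTree

/-! Leaves of two trees always contribute `w_• · #leaves(S) · #leaves(T)` to the kernel, since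
every leaf roots a copy of the single-vertex tree, and all other terms are nonnegative.
Under (C2) no non-leaf subtree of `T0` is isomorphic to one of `T1`, so the single-vertex class
is the only class the two trees share and the kernel consists of that term alone. -/

namespace RTree

theorem subAt_cons (t : RTree) (i : ℕ) (p : List ℕ) :
    t.subAt (i :: p) = (t.children[i]?).bind (·.subAt p) := by
  rw [subAt]
  cases t.children[i]? <;> rfl

theorem subAt_append (t : RTree) (p q : List ℕ) :
    t.subAt (p ++ q) = (t.subAt p).bind (·.subAt q) := by
  induction p generalizing t with
  | nil => simp [subAt]
  | cons i p ih =>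
    rw [List.cons_append, subAt_cons, subAt_cons]
    cases t.children[i]? <;> simp [ih]

theorem isVertex_nil (t : RTree) : t.IsVertex [] := by
  simp [IsVertex, subAt]

theorem isVertex_node_cons (cs : List RTree) (i : ℕ) (p : List ℕ) :
    (node cs).IsVertex (i :: p) ↔ ∃ h : i < cs.length, cs[i].IsVertex p := by
  simp only [IsVertex, subAt_cons, children]
  by_cases h : i < cs.length <;> simp [h]

theorem isVertex_node_nil_iff {p : List ℕ} : (node []).IsVertex p ↔ p = [] := by
  cases p with
  | nil => simpa using isVertex_nil _
  | cons i p => simp [isVertex_node_cons]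

theorem isLeafAt_iff_subAt {t : RTree} {p : List ℕ} :
    t.IsLeafAt p ↔ t.subAt p = some (node []) := by
  simp only [IsLeafAt, IsVertex, subAt_append]
  rcases t.subAt p with _ | ⟨_ | _⟩ <;> simp [subAt_cons, children, subAt]

theorem subtreeAt_of_isLeafAt {t : RTree} {p : List ℕ} (h : t.IsLeafAt p) :
    t.subtreeAt p = node [] := by
  simp [subtreeAt, isLeafAt_iff_subAt.1 h]

theorem isLeafAt_iff {t : RTree} {p : List ℕ} :
    t.IsLeafAt p ↔ t.IsVertex p ∧ t.subtreeAt p = node [] := by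
  rw [isLeafAt_iff_subAt]
  unfold IsVertex subtreeAt
  cases t.subAt p <;> simp

theorem exists_isLeafAt : ∀ t : RTree, ∃ p, t.IsLeafAt p
  | node [] => ⟨[], isLeafAt_iff_subAt.2 (by simp [subAt])⟩
  | node (c :: cs) => by
    obtain ⟨p, hp⟩ := exists_isLeafAt c
    refine ⟨0 :: p, isLeafAt_iff_subAt.2 ?_⟩
    simpa [subAt_cons, children] using isLeafAt_iff_subAt.1 hp

theorem finite_setOf_isVertex : ∀ t : RTree, {p : List ℕ | t.IsVertex p}.Finite
  | node cs => by
    have hsub : {p | (node cs).IsVertex p} ⊆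
        insert [] (⋃ i : Fin cs.length, (i.1 :: ·) '' {p | cs[i].IsVertex p}) := by
      rintro (_ | ⟨i, p⟩) hp
      · exact Set.mem_insert _ _
      · obtain ⟨hi, hv⟩ := (isVertex_node_cons cs i p).1 hp
        exact Or.inr (Set.mem_iUnion.2 ⟨⟨i, hi⟩, p, hv, rfl⟩)
    refine ((Set.finite_iUnion fun i : Fin cs.length => ?_).insert []).subset hsub
    exact (finite_setOf_isVertex cs[i]).image _
decreasing_by
  have := List.sizeOf_lt_of_mem (List.getElem_mem i.2)
  simp only [Fin.getElem_fin, node.sizeOf_spec]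
  omega

theorem iso_refl (t : RTree) : t.Iso t :=
  ⟨id, id, fun _ hp => hp, fun _ hq => hq, fun _ _ => rfl, fun _ _ => rfl,
    fun _ i _ => ⟨i, rfl⟩⟩

theorem iso_of_isoClass_eq {s t : RTree} (h : isoClass s = isoClass t) : s.Iso t := by
  rw [isoClass, isoClass, Set.ext_iff] at h
  exact (h t).2 (iso_refl t)

theorem eq_node_nil_of_iso {s : RTree} (h : (node []).Iso s) : s = node [] := by
  obtain ⟨_ | ⟨c, cs⟩⟩ := s
  · rfl
  obtain ⟨f, g, -, hg, -, hfg, -⟩ := h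
  have hroot : (node (c :: cs)).IsVertex [] := isVertex_nil _
  have hchild : (node (c :: cs)).IsVertex [0] :=
    (isVertex_node_cons _ _ _).2 ⟨by simp, isVertex_nil c⟩
  have hg_eq : g [0] = g [] :=
    (isVertex_node_nil_iff.1 (hg _ hchild)).trans (isVertex_node_nil_iff.1 (hg _ hroot)).symm
  have : [0] = [] := by rw [← hfg _ hchild, hg_eq, hfg _ hroot]
  simp at this

theorem isoClass_eq_leafClass_iff {t : RTree} : isoClass t = leafClass ↔ t = node [] :=
  ⟨fun h => eq_node_nil_of_iso (iso_of_isoClass_eq h.symm), fun h => h ▸ rfl⟩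

theorem finite_classes (T : RTree) : (classes T).Finite :=
  ((finite_setOf_isVertex T).image fun p => isoClass (T.subtreeAt p)).subset
    fun _ ⟨p, hp, hC⟩ => ⟨p, hp, hC.symm⟩

theorem leafClass_mem_classes (T : RTree) : leafClass ∈ classes T := by
  obtain ⟨p, hp⟩ := exists_isLeafAt T
  exact ⟨p, hp.1, by rw [subtreeAt_of_isLeafAt hp]; rfl⟩

theorem classCount_leafClass (T : RTree) : classCount leafClass T = leafCount T := by
  simp only [classCount, leafCount, isoClass_eq_leafClass_iff, isLeafAt_iff]

theorem classes_inter_eq_singleton_leafClass {T0 T1 : RTree} (h : CondTwo T0 T1) :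
    classes T0 ∩ classes T1 = {leafClass} := by
  refine Set.eq_singleton_iff_unique_mem.2
    ⟨⟨leafClass_mem_classes T0, leafClass_mem_classes T1⟩, ?_⟩
  rintro C ⟨⟨p, hp, rfl⟩, ⟨q, hq, hpq⟩⟩
  by_cases hleaf₀ : T0.IsLeafAt p
  · rw [subtreeAt_of_isLeafAt hleaf₀]; rfl
  by_cases hleaf₁ : T1.IsLeafAt q
  · rw [hpq, subtreeAt_of_isLeafAt hleaf₁]; rfl
  exact absurd (iso_of_isoClass_eq hpq) (h p q hp hq hleaf₀ hleaf₁)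

theorem kernel_eq_of_classes_inter_eq_singleton (w : Set RTree → ℝ) {S T : RTree}
    {C : Set RTree} (h : classes S ∩ classes T = {C}) :
    kernel w S T = w C * classCount C S * classCount C T := by
  rw [kernel, h, tsum_singleton C fun C => w C * classCount C S * classCount C T]

theorem le_kernel {w : Set RTree → ℝ} (hw : ∀ C, 0 ≤ w C) {S T : RTree} {C : Set RTree}
    (hC : C ∈ classes S ∩ classes T) :
    w C * classCount C S * classCount C T ≤ kernel w S T := by
  have := ((finite_classes S).inter_of_left (classes T)).to_subtype
  exact Summable.of_finite.le_tsum (L := SummationFilter.unconditional _)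
    (f := fun C : ↥(classes S ∩ classes T) => w C * classCount C S * classCount C T)
    ⟨C, hC⟩ fun D _ => by have := hw D; positivity

end RTree

open RTree in
theorem statement0_general (w : Set RTree → ℝ) (hw : ∀ C, 0 ≤ w C)
    (T0 T1 : RTree) (hC2 : CondTwo T0 T1) :
    kernel w T0 T1 = w leafClass * (leafCount T0 : ℝ) * (leafCount T1 : ℝ) ∧
    ∀ S T : RTree,
      w leafClass * (leafCount S : ℝ) * (leafCount T : ℝ) ≤ kernel w S T := by
  refine ⟨?_, fun S T => ?_⟩
  · rw [kernel_eq_of_classes_inter_eq_singleton w (classes_inter_eq_singleton_leafClass hC2),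
      classCount_leafClass, classCount_leafClass]
  · simpa only [classCount_leafClass] using
      le_kernel hw ⟨leafClass_mem_classes S, leafClass_mem_classes T⟩

open RTree in
/-- If `T0` and `T1` satisfy (C1) and (C2), then
`K(T0,T1) = w_• · #leaves(T0) · #leaves(T1)`; moreover this is the minimal possible value
of the kernel: for any rooted trees `S, T`, `K(S,T) ≥ w_• · #leaves(S) · #leaves(T)`. -/
theorem statement0 (w : Set RTree → ℝ) (hw : ∀ C, 0 ≤ w C)
    (T0 T1 : RTree) (hC1₀ : CondOne T0) (hC1₁ : CondOne T1) (hC2 : CondTwo T0 T1) :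
    kernel w T0 T1 = w leafClass * (leafCount T0 : ℝ) * (leafCount T1 : ℝ) ∧
    ∀ S T : RTree,
      w leafClass * (leafCount S : ℝ) * (leafCount T : ℝ) ≤ kernel w S T :=
  statement0_general w hw T0 T1 hC2
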